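/- arXiv:2210.07077 — 2 statements merged into one kernel-verified Lean document; each statement's English description precedes it below -/
import Mathlib

section
/- Define ‖X‖_$ := inf over all factorizations X = U V^* (with U ∈ ℝ^{M×r}, V ∈ ℝ^{NK×r}, r arbitrary) of ‖U‖_F · ‖V^*‖_{∞,F}, where V^* is viewed as an r-by-NK matrix partitioned into K blocks of size r×N. Then for every X ∈ ℝ^{M×NK} with rank(X) ≤ r, one has ‖X‖_{∞,F} ≤ ‖X‖_$ ≤ √r · ‖X‖_{∞,F}. -/
/-!
The lower bound is submultiplicativity of the Frobenius norm, applied block by block to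
`X_k = U (Vᵀ)_k`. For the upper bound, let the columns of `U` be an orthonormal basis of the
column space of `X`, so that `X = U (Uᵀ X)`. Then `‖U‖_F = √(rank X)`, and since `Uᵀ U = 1`,
left multiplication by `U` preserves Frobenius norms, whence `‖Uᵀ X‖_{∞,F} = ‖X‖_{∞,F}`.
-/

open scoped BigOperators

/-- Frobenius norm of a real matrix. -/
noncomputable def frob {m n : ℕ} (A : Matrix (Fin m) (Fin n) ℝ) : ℝ :=
  Real.sqrt (∑ i, ∑ j, (A i j) ^ 2)

/-- Index of the `j`th column of the `k`th block inside `Fin (N * K)`. -/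
def blkIdx {N K : ℕ} (k : Fin K) (j : Fin N) : Fin (N * K) :=
  ⟨j.1 + N * k.1, by
    have hj := j.isLt
    have hk := k.isLt
    calc j.1 + N * k.1 < N + N * k.1 := by omega
      _ = N * (k.1 + 1) := by ring
      _ ≤ N * K := Nat.mul_le_mul_left N hk⟩

/-- The `k`th `M × N` block of an `M × NK` matrix. -/
noncomputable def blk {M N K : ℕ} (X : Matrix (Fin M) (Fin (N * K)) ℝ) (k : Fin K) :
    Matrix (Fin M) (Fin N) ℝ :=
  Matrix.of fun i j => X i (blkIdx k j)

/-- Maximum-block-Frobenius norm `‖X‖_{∞,F} = max_k ‖X_k‖_F`. -/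
noncomputable def bnorm {M N K : ℕ} (X : Matrix (Fin M) (Fin (N * K)) ℝ) : ℝ :=
  ⨆ k : Fin K, frob (blk X k)

/-- The `$`-norm: `inf_{X = U Vᵀ} ‖U‖_F ‖Vᵀ‖_{∞,F}` over factorizations of arbitrary
inner dimension. -/
noncomputable def dollar {M N K : ℕ} (X : Matrix (Fin M) (Fin (N * K)) ℝ) : ℝ :=
  sInf {t : ℝ | ∃ (r : ℕ) (U : Matrix (Fin M) (Fin r) ℝ)
    (V : Matrix (Fin (N * K)) (Fin r) ℝ),
    X = U * V.transpose ∧ t = frob U * bnorm V.transpose}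

open Matrix

lemma frob_eq_sqrt_trace {m n : ℕ} (A : Matrix (Fin m) (Fin n) ℝ) :
    frob A = √(Aᵀ * A).trace := by
  rw [frob, Finset.sum_comm]
  simp [Matrix.trace, Matrix.mul_apply, sq]

lemma frob_eq_frobenius_norm {m n : ℕ} (A : Matrix (Fin m) (Fin n) ℝ) :
    frob A = @norm _ Matrix.frobeniusNormedAddCommGroup.toNorm A := by
  rw [Matrix.frobenius_norm_def, frob, Real.sqrt_eq_rpow]
  simp [sq_abs]

lemma frob_mul_le {m n p : ℕ} (A : Matrix (Fin m) (Fin n) ℝ) (B : Matrix (Fin n) (Fin p) ℝ) :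
    frob (A * B) ≤ frob A * frob B := by
  simpa only [frob_eq_frobenius_norm] using Matrix.frobenius_norm_mul A B

lemma frob_mul_of_transpose_mul_self_eq_one {m n p : ℕ} {U : Matrix (Fin m) (Fin n) ℝ}
    (hU : Uᵀ * U = 1) (A : Matrix (Fin n) (Fin p) ℝ) : frob (U * A) = frob A := by
  rw [frob_eq_sqrt_trace, frob_eq_sqrt_trace, transpose_mul, Matrix.mul_assoc,
    ← Matrix.mul_assoc Uᵀ, hU, Matrix.one_mul]

lemma frob_of_transpose_mul_self_eq_one {m n : ℕ} {U : Matrix (Fin m) (Fin n) ℝ}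
    (hU : Uᵀ * U = 1) : frob U = √n := by
  rw [frob_eq_sqrt_trace, hU, trace_one, Fintype.card_fin]

lemma exists_orthonormal_cols_mul_transpose_mul_eq_self {m p : ℕ}
    (X : Matrix (Fin m) (Fin p) ℝ) :
    ∃ U : Matrix (Fin m) (Fin X.rank) ℝ, Uᵀ * U = 1 ∧ U * (Uᵀ * X) = X := by
  set S := LinearMap.range (toEuclideanLin X)
  have hS : Module.finrank ℝ S = X.rank := by
    rw [X.rank_eq_finrank_range_toLin (PiLp.basisFun 2 ℝ (Fin m)) (PiLp.basisFun 2 ℝ (Fin p))]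
    rfl
  let b := (stdOrthonormalBasis ℝ S).reindex (finCongr hS)
  have hinner (a : Fin X.rank) (y : EuclideanSpace ℝ (Fin m)) :
      inner ℝ (b a : EuclideanSpace ℝ (Fin m)) y =
        ∑ i, (b a : EuclideanSpace ℝ (Fin m)) i * y i := by
    simp [PiLp.inner_apply, mul_comm]
  refine ⟨Matrix.of fun i a => (b a : EuclideanSpace ℝ (Fin m)) i, ?_, ?_⟩
  · ext a c
    have hb := orthonormal_iff_ite.mp b.orthonormal a c
    simpa [Matrix.mul_apply, ← hinner, ← Submodule.coe_inner, Matrix.one_apply] using hb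
  · ext i j
    set y := toEuclideanLin X (EuclideanSpace.single j 1)
    have hy : ∀ i, y i = X i j := by simp [y]
    have hrepr := congrArg (fun z : S => (z : EuclideanSpace ℝ (Fin m)) i)
      (b.sum_repr' ⟨y, LinearMap.mem_range_self _ _⟩)
    simp only [Submodule.coe_sum, Submodule.coe_smul, Submodule.coe_inner, hinner] at hrepr
    simp only [Matrix.mul_apply, Matrix.transpose_apply, Matrix.of_apply]
    simpa [hy, mul_comm] using hrepr

section Blocks

variable {M N K : ℕ}

lemma bnorm_nonneg (X : Matrix (Fin M) (Fin (N * K)) ℝ) : 0 ≤ bnorm X :=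
  Real.iSup_nonneg fun _ => Real.sqrt_nonneg _

lemma frob_blk_le_bnorm (X : Matrix (Fin M) (Fin (N * K)) ℝ) (k : Fin K) :
    frob (blk X k) ≤ bnorm X :=
  le_ciSup (f := fun k => frob (blk X k)) (Set.finite_range _).bddAbove k

lemma bnorm_le {X : Matrix (Fin M) (Fin (N * K)) ℝ} {t : ℝ} (ht : 0 ≤ t)
    (h : ∀ k, frob (blk X k) ≤ t) : bnorm X ≤ t :=
  Real.iSup_le h ht

lemma blk_mul {q : ℕ} (U : Matrix (Fin M) (Fin q) ℝ) (W : Matrix (Fin q) (Fin (N * K)) ℝ)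
    (k : Fin K) : blk (U * W) k = U * blk W k := by
  ext i j
  simp [blk, Matrix.mul_apply]

lemma bnorm_mul_le {q : ℕ} (U : Matrix (Fin M) (Fin q) ℝ)
    (W : Matrix (Fin q) (Fin (N * K)) ℝ) : bnorm (U * W) ≤ frob U * bnorm W :=
  bnorm_le (mul_nonneg (Real.sqrt_nonneg _) (bnorm_nonneg W)) fun k =>
    calc frob (blk (U * W) k) = frob (U * blk W k) := by rw [blk_mul]
      _ ≤ frob U * frob (blk W k) := frob_mul_le _ _
      _ ≤ frob U * bnorm W :=
        mul_le_mul_of_nonneg_left (frob_blk_le_bnorm W k) (Real.sqrt_nonneg _)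

lemma bnorm_mul_of_transpose_mul_self_eq_one {q : ℕ} {U : Matrix (Fin M) (Fin q) ℝ}
    (hU : Uᵀ * U = 1) (W : Matrix (Fin q) (Fin (N * K)) ℝ) : bnorm (U * W) = bnorm W := by
  simp only [bnorm, blk_mul, frob_mul_of_transpose_mul_self_eq_one hU]

lemma dollar_le_of_eq_mul {r : ℕ} {X : Matrix (Fin M) (Fin (N * K)) ℝ}
    (U : Matrix (Fin M) (Fin r) ℝ) (V : Matrix (Fin (N * K)) (Fin r) ℝ) (h : X = U * Vᵀ) :
    dollar X ≤ frob U * bnorm Vᵀ := by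
  refine csInf_le ⟨0, ?_⟩ ⟨r, U, V, h, rfl⟩
  rintro t ⟨q, U', V', -, rfl⟩
  exact mul_nonneg (Real.sqrt_nonneg _) (bnorm_nonneg _)

lemma bnorm_le_dollar (X : Matrix (Fin M) (Fin (N * K)) ℝ) : bnorm X ≤ dollar X := by
  refine le_csInf ⟨_, N * K, X, 1, by simp, rfl⟩ ?_
  rintro t ⟨q, U, V, rfl, rfl⟩
  exact bnorm_mul_le U Vᵀ

lemma dollar_le_sqrt_rank_mul_bnorm (X : Matrix (Fin M) (Fin (N * K)) ℝ) :
    dollar X ≤ √X.rank * bnorm X := by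
  obtain ⟨U, hU, hX⟩ := exists_orthonormal_cols_mul_transpose_mul_eq_self X
  have hUX : (Xᵀ * U)ᵀ = Uᵀ * X := by rw [transpose_mul, transpose_transpose]
  calc dollar X ≤ frob U * bnorm (Xᵀ * U)ᵀ := dollar_le_of_eq_mul U _ (by rw [hUX, hX])
    _ = √X.rank * bnorm X := by
      rw [hUX, frob_of_transpose_mul_self_eq_one hU, ← bnorm_mul_of_transpose_mul_self_eq_one hU,
        hX]

end Blocks

/-- interlacing inequalities `‖X‖_{∞,F} ≤ ‖X‖_$ ≤ √r ‖X‖_{∞,F}`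
for rank-`r` matrices. -/
theorem stmt1 (M N K r : ℕ) (X : Matrix (Fin M) (Fin (N * K)) ℝ) (hr : X.rank ≤ r) :
    bnorm X ≤ dollar X ∧ dollar X ≤ Real.sqrt r * bnorm X :=
  ⟨bnorm_le_dollar X, (dollar_le_sqrt_rank_mul_bnorm X).trans <|
    mul_le_mul_of_nonneg_right (Real.sqrt_le_sqrt (by exact_mod_cast hr)) (bnorm_nonneg X)⟩
end

section
/- Let Q ∈ ℝ^{m×n} with Q^*Q positive definite, b ∈ ℝ^m, and for λ ≥ 0 define x(λ) := (Q^*Q + λ I)^{-1} Q^* b. Then the function λ ↦ ‖x(λ)‖_2 is nonincreasing on [0, ∞). -/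
open scoped BigOperators
open Matrix

namespace Matrix

variable {n : Type*} [Fintype n]

lemma PosSemidef.dotProduct_self_le_add_smul_mulVec {P : Matrix n n ℝ} (hP : P.PosSemidef)
    {t : ℝ} (ht : 0 ≤ t) (x : n → ℝ) :
    x ⬝ᵥ x ≤ (x + t • P *ᵥ x) ⬝ᵥ (x + t • P *ᵥ x) := by
  have hxPx : 0 ≤ x ⬝ᵥ P *ᵥ x := by simpa using hP.dotProduct_mulVec_nonneg x
  have hPx : 0 ≤ P *ᵥ x ⬝ᵥ P *ᵥ x := by simpa using dotProduct_self_star_nonneg (P *ᵥ x)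
  simp only [add_dotProduct, dotProduct_add, smul_dotProduct, dotProduct_smul, smul_eq_mul,
    dotProduct_comm (P *ᵥ x) x]
  nlinarith [mul_nonneg ht hxPx, mul_nonneg (mul_nonneg ht ht) hPx]

variable [DecidableEq n]

lemma inv_mulVec_add_smul_one_mulVec {B : Matrix n n ℝ} (hB : IsUnit B.det) (t : ℝ)
    (x : n → ℝ) : B⁻¹ *ᵥ ((B + t • 1) *ᵥ x) = x + t • B⁻¹ *ᵥ x := by
  rw [add_mulVec, smul_mulVec, one_mulVec, mulVec_add, mulVec_mulVec, nonsing_inv_mul _ hB,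
    one_mulVec, mulVec_smul]

/-- With `x = (B + t)⁻¹ c` one has `B⁻¹ c = x + t B⁻¹ x`, and `B⁻¹` is positive definite. -/
lemma PosDef.dotProduct_self_inv_add_smul_one_mulVec_le {B : Matrix n n ℝ} (hB : B.PosDef)
    {t : ℝ} (ht : 0 ≤ t) (c : n → ℝ) :
    (B + t • 1)⁻¹ *ᵥ c ⬝ᵥ (B + t • 1)⁻¹ *ᵥ c ≤ B⁻¹ *ᵥ c ⬝ᵥ B⁻¹ *ᵥ c := by
  have hBt : IsUnit (B + t • 1).det :=
    (isUnit_iff_isUnit_det _).mp (hB.add_posSemidef (PosSemidef.one.smul ht)).isUnit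
  set x := (B + t • 1)⁻¹ *ᵥ c
  have hc : c = (B + t • 1) *ᵥ x := by rw [mulVec_mulVec, mul_nonsing_inv _ hBt, one_mulVec]
  rw [hc, inv_mulVec_add_smul_one_mulVec ((isUnit_iff_isUnit_det _).mp hB.isUnit)]
  exact hB.inv.posSemidef.dotProduct_self_le_add_smul_mulVec ht x

end Matrix

/-- `λ ↦ ‖(QᵀQ + λI)⁻¹ Qᵀ b‖₂` is nonincreasing on `[0, ∞)` when `QᵀQ`
is positive definite. -/
theorem stmt8 (m n : ℕ) (Q : Matrix (Fin m) (Fin n) ℝ) (b : Fin m → ℝ)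
    (hQ : (Q.transpose * Q).PosDef) :
    ∀ l₁ l₂ : ℝ, 0 ≤ l₁ → l₁ ≤ l₂ →
      Real.sqrt (∑ i, (((Q.transpose * Q + l₂ • (1 : Matrix (Fin n) (Fin n) ℝ))⁻¹ *ᵥ
          (Q.transpose *ᵥ b)) i) ^ 2) ≤
      Real.sqrt (∑ i, (((Q.transpose * Q + l₁ • (1 : Matrix (Fin n) (Fin n) ℝ))⁻¹ *ᵥ
          (Q.transpose *ᵥ b)) i) ^ 2) := by
  intro l₁ l₂ hl₁ hl
  have hB : (Q.transpose * Q + l₁ • 1).PosDef := hQ.add_posSemidef (PosSemidef.one.smul hl₁)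
  have hshift : Q.transpose * Q + l₂ • (1 : Matrix (Fin n) (Fin n) ℝ) =
      Q.transpose * Q + l₁ • 1 + (l₂ - l₁) • 1 := by module
  simp only [sq, hshift]
  exact Real.sqrt_le_sqrt (hB.dotProduct_self_inv_add_smul_one_mulVec_le (sub_nonneg.mpr hl) _)
end
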